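/- Let α, β > 0, s₀ ∈ (0, 1/2], T = (1−s₀)/α, and let g : ℝ → ℝ be continuously differentiable and satisfy 2αβ < g(x) < α² + αβ for all x ∈ ℝ. Then the Cauchy problem ṡ(t) = (α+β)/2 − √( ((α+β)/2)² + g(s(t)+αt) − αβ ), s(0) = s₀, has a unique continuously differentiable solution s on [0,T]; moreover this solution satisfies −α < ṡ(t) < 0 for all t ∈ [0,T] (so s is strictly decreasing), and s₀ ≤ s(t) + αt ≤ 1 for all t ∈ [0,T]. -/

import Mathlib

/-!
Along a solution the velocity is `v t x = V(g(x + αt))`, with `V = freeBoundaryVelocity α β`;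
(H3) puts it in `(-α, 0)`, and `V ∘ g` is `C¹` since the radicand is `((α-β)/2)² + g > 0`.
A `C¹` field is Lipschitz on compact sets, and `|v| ≤ α` keeps every solution starting at `s₀`
in the ball of radius `αT` around `s₀`, so Picard–Lindelöf gives a solution on all of `[0, T]` and
Gronwall its uniqueness. Finally `s₀ - αt ≤ s(t) ≤ s₀` and `αT = 1 - s₀` give `s₀ ≤ s + αt ≤ 1`.
-/

open Set Metric Function
open scoped NNReal

section BoundedVectorField

variable {E : Type*} [NormedAddCommGroup E] [NormedSpace ℝ E] {v : ℝ → E → E} {C T : ℝ}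

theorem exists_lipschitzOnWith_of_contDiff_uncurry (hv : ContDiff ℝ 1 (uncurry v))
    {I : Set ℝ} {B : Set E} (hI : IsCompact I) (hB : IsCompact B) :
    ∃ K, ∀ t ∈ I, LipschitzOnWith K (v t) B := by
  obtain ⟨K, hK⟩ := hv.locallyLipschitz.locallyLipschitzOn.exists_lipschitzOnWith_of_compact
    (hI.prod hB)
  refine ⟨K, fun t ht => ?_⟩
  have := hK.comp (LipschitzWith.prodMk_left t).lipschitzOnWith fun x hx => mk_mem_prod ht hx
  rwa [mul_one] at this

theorem norm_sub_le_mul_of_hasDerivWithinAt_Icc {γ γ' : ℝ → E}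
    (hγ : ∀ t ∈ Icc 0 T, HasDerivWithinAt γ (γ' t) (Icc 0 T) t)
    (hC : ∀ t ∈ Icc 0 T, ‖γ' t‖ ≤ C) {t : ℝ} (ht : t ∈ Icc 0 T) :
    ‖γ t - γ 0‖ ≤ C * t := by
  have h0 : (0 : ℝ) ∈ Icc 0 T := left_mem_Icc.2 (ht.1.trans ht.2)
  simpa [abs_of_nonneg ht.1] using
    (convex_Icc 0 T).norm_image_sub_le_of_norm_hasDerivWithin_le hγ hC h0 ht

variable [ProperSpace E]

theorem exists_hasDerivWithinAt_Icc_of_contDiff_of_norm_le (hv : ContDiff ℝ 1 (uncurry v))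
    (hC : ∀ t x, ‖v t x‖ ≤ C) (hT : 0 ≤ T) (x₀ : E) :
    ∃ γ : ℝ → E, γ 0 = x₀ ∧ ∀ t ∈ Icc 0 T, HasDerivWithinAt γ (v t (γ t)) (Icc 0 T) t := by
  have hC0 : 0 ≤ C := (norm_nonneg _).trans (hC 0 0)
  set L : ℝ≥0 := ⟨C, hC0⟩
  set a : ℝ≥0 := ⟨C * T, mul_nonneg hC0 hT⟩
  obtain ⟨K, hK⟩ := exists_lipschitzOnWith_of_contDiff_uncurry hv isCompact_Icc
    (isCompact_closedBall x₀ a)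
  have hPL : IsPicardLindelof v (⟨0, left_mem_Icc.2 hT⟩ : Icc 0 T) x₀ a 0 L K :=
    { lipschitzOnWith := hK
      continuousOn := fun x _ =>
        (hv.continuous.comp (continuous_id.prodMk continuous_const)).continuousOn
      norm_le := fun t _ x _ => hC t x
      mul_max_le := by simp [a, L, max_eq_left hT]; rfl }
  exact hPL.exists_eq_forall_mem_Icc_hasDerivWithinAt₀

theorem ODE_solution_unique_Icc_of_contDiff_of_norm_le (hv : ContDiff ℝ 1 (uncurry v))
    (hC : ∀ t x, ‖v t x‖ ≤ C) {γ δ : ℝ → E}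
    (hγ : ∀ t ∈ Icc 0 T, HasDerivWithinAt γ (v t (γ t)) (Icc 0 T) t)
    (hδ : ∀ t ∈ Icc 0 T, HasDerivWithinAt δ (v t (δ t)) (Icc 0 T) t) (h0 : γ 0 = δ 0) :
    EqOn γ δ (Icc 0 T) := by
  obtain ⟨K, hK⟩ := exists_lipschitzOnWith_of_contDiff_uncurry hv isCompact_Icc
    (isCompact_closedBall (γ 0) (C * T))
  have mem_ball {ε : ℝ → E} (hε : ∀ t ∈ Icc 0 T, HasDerivWithinAt ε (v t (ε t)) (Icc 0 T) t)
      (hε0 : ε 0 = γ 0) (t : ℝ) (ht : t ∈ Ico 0 T) : ε t ∈ closedBall (γ 0) (C * T) := by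
    rw [mem_closedBall, dist_eq_norm, ← hε0]
    calc ‖ε t - ε 0‖ ≤ C * t :=
          norm_sub_le_mul_of_hasDerivWithinAt_Icc hε (fun t _ => hC t _) (Ico_subset_Icc_self ht)
      _ ≤ C * T := mul_le_mul_of_nonneg_left ht.2.le ((norm_nonneg _).trans (hC 0 (γ 0)))
  have right_deriv {ε : ℝ → E} (hε : ∀ t ∈ Icc 0 T, HasDerivWithinAt ε (v t (ε t)) (Icc 0 T) t)
      (t : ℝ) (ht : t ∈ Ico 0 T) : HasDerivWithinAt ε (v t (ε t)) (Ici t) t :=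
    (hε t (Ico_subset_Icc_self ht)).mono_of_mem_nhdsWithin (Icc_mem_nhdsGE_of_mem ht)
  exact ODE_solution_unique_of_mem_Icc_right (fun t ht => hK t (Ico_subset_Icc_self ht))
    (HasDerivWithinAt.continuousOn hγ) (right_deriv hγ) (mem_ball hγ rfl)
    (HasDerivWithinAt.continuousOn hδ) (right_deriv hδ) (mem_ball hδ h0.symm) h0

end BoundedVectorField

section Velocity

variable {α β c : ℝ}

noncomputable def freeBoundaryVelocity (α β c : ℝ) : ℝ :=
  (α + β) / 2 - √(((α + β) / 2) ^ 2 + c - α * β)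

theorem freeBoundaryVelocity_neg (hαβ : 0 ≤ α + β) (hc : α * β < c) :
    freeBoundaryVelocity α β c < 0 := by
  rw [freeBoundaryVelocity, sub_neg, Real.lt_sqrt (by linarith)]
  linarith

theorem neg_lt_freeBoundaryVelocity (hα : 0 < α) (hβ : 0 ≤ β) (hc : c < 2 * α * (α + β)) :
    -α < freeBoundaryVelocity α β c := by
  rw [freeBoundaryVelocity, neg_lt_sub_iff_lt_add, Real.sqrt_lt' (by linarith)]
  nlinarith

theorem ContDiff.freeBoundaryVelocity {n : WithTop ℕ∞} {g : ℝ → ℝ} (hg : ContDiff ℝ n g)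
    (hg₀ : ∀ x, 0 < g x) : ContDiff ℝ n fun x => freeBoundaryVelocity α β (g x) := by
  refine contDiff_const.sub (((contDiff_const.add hg).sub contDiff_const).sqrt fun x => ?_)
  nlinarith [hg₀ x, sq_nonneg (α - β)]

end Velocity

theorem free_boundary_ode_global_wellposed (α β s₀ T : ℝ) (g : ℝ → ℝ)
    (hα : 0 < α) (hβ : 0 < β) (hs₀ : s₀ ∈ Set.Ioc 0 (1 / 2 : ℝ))
    (hT : T = (1 - s₀) / α) (hg : ContDiff ℝ 1 g)
    (hgl : ∀ x : ℝ, 2 * α * β < g x) (hgu : ∀ x : ℝ, g x < α ^ 2 + α * β) :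
    ∃ s : ℝ → ℝ,
      (ContDiffOn ℝ 1 s (Set.Icc 0 T) ∧ s 0 = s₀ ∧
        ∀ t ∈ Set.Icc 0 T, HasDerivWithinAt s
          ((α + β) / 2 - Real.sqrt (((α + β) / 2) ^ 2 + g (s t + α * t) - α * β))
          (Set.Icc 0 T) t) ∧
      (∀ s' : ℝ → ℝ,
        (ContDiffOn ℝ 1 s' (Set.Icc 0 T) ∧ s' 0 = s₀ ∧
          ∀ t ∈ Set.Icc 0 T, HasDerivWithinAt s'
            ((α + β) / 2 - Real.sqrt (((α + β) / 2) ^ 2 + g (s' t + α * t) - α * β))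
            (Set.Icc 0 T) t) →
        Set.EqOn s' s (Set.Icc 0 T)) ∧
      (∀ t ∈ Set.Icc 0 T,
        -α < (α + β) / 2 - Real.sqrt (((α + β) / 2) ^ 2 + g (s t + α * t) - α * β) ∧
        (α + β) / 2 - Real.sqrt (((α + β) / 2) ^ 2 + g (s t + α * t) - α * β) < 0) ∧
      StrictAntiOn s (Set.Icc 0 T) ∧
      (∀ t ∈ Set.Icc 0 T, s₀ ≤ s t + α * t ∧ s t + α * t ≤ 1) := by
  set v : ℝ → ℝ → ℝ := fun t x => freeBoundaryVelocity α β (g (x + α * t))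
  have hv : ContDiff ℝ 1 (uncurry v) :=
    (hg.freeBoundaryVelocity fun x => by nlinarith [hgl x]).comp (by fun_prop)
  have hv_neg (t x : ℝ) : v t x < 0 :=
    freeBoundaryVelocity_neg (by linarith) (by nlinarith [hgl (x + α * t)])
  have hv_gt (t x : ℝ) : -α < v t x :=
    neg_lt_freeBoundaryVelocity hα hβ.le (by nlinarith [hgu (x + α * t)])
  have hv_norm (t x : ℝ) : ‖v t x‖ ≤ α :=
    abs_le.2 ⟨(hv_gt t x).le, (hv_neg t x).le.trans hα.le⟩
  have hαT : α * T = 1 - s₀ := by rw [hT]; field_simp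
  have hT₀ : 0 ≤ T := hT ▸ div_nonneg (by linarith [hs₀.2]) hα.le
  obtain ⟨s, hs₀', hs⟩ := exists_hasDerivWithinAt_Icc_of_contDiff_of_norm_le hv hv_norm hT₀ s₀
  have hs_anti : StrictAntiOn s (Icc 0 T) :=
    strictAntiOn_of_hasDerivWithinAt_neg (convex_Icc 0 T) (HasDerivWithinAt.continuousOn hs)
      (fun t ht => (hs t (interior_subset ht)).mono interior_subset) fun t _ => hv_neg _ _
  refine ⟨s, ⟨?_, hs₀', hs⟩, fun s' ⟨_, hs'₀, hs'⟩ => ?_, fun t _ => ⟨hv_gt _ _, hv_neg _ _⟩,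
    hs_anti, fun t ht => ?_⟩
  · exact ODE.contDiffOn_enat_Icc_of_hasDerivWithinAt (hv.contDiffOn (s := Icc 0 T ×ˢ univ)) hs
      (mapsTo_univ _ _)
  · exact ODE_solution_unique_Icc_of_contDiff_of_norm_le hv hv_norm hs' hs (hs'₀.trans hs₀'.symm)
  · obtain ⟨h_drift, -⟩ :=
      abs_le.1 (norm_sub_le_mul_of_hasDerivWithinAt_Icc hs (fun t _ => hv_norm t _) ht)
    have h_dec : s t ≤ s₀ := hs₀' ▸ hs_anti.antitoneOn (left_mem_Icc.2 hT₀) ht ht.1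
    have h_time : α * t ≤ α * T := mul_le_mul_of_nonneg_left ht.2 hα.le
    constructor <;> linarith
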